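/- arXiv:2302.09674 — 3 statements merged into one kernel-verified Lean document; each statement's English description precedes it below -/
import Mathlib

section
/- Let φ: E₁ → E₀ be a separable isogeny of elliptic curves defined over a finite field k, and let P ∈ E₀(k̄). Suppose all points of ker φ are defined over k(P). Then there exists a point F ∈ ker φ such that for every point Q ∈ φ⁻¹(P) and every natural number n, πⁿ(Q) = Q + nF, where π denotes the k(P)-Frobenius endomorphism on E₁. -/
open WeierstrassCurve WeierstrassCurve.Affine IntermediateField
open scoped Classical

noncomputable section

/-- The algebraic closure of `k`, where points of our curves live. -/
abbrev kbar (k : Type) [Field k] := AlgebraicClosure k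

variable {k : Type} [Field k]

/-- The field of definition `k(P)` of a point `P` on a Weierstrass curve, as an
intermediate field of `k̄/k`: the subfield generated by the coordinates of `P`. -/
def ptField (W : WeierstrassCurve k) : (W⁄(kbar k)).Point → IntermediateField k (kbar k)
  | .zero => ⊥
  | .some (x := x) (y := y) _ => adjoin k {x, y}

/-- The degree `[E⊔F : E]` of the compositum of two intermediate fields over the first;
when `E ≤ E⊔F = F` this is the degree `[F : E]`. -/
def extDeg {k K : Type*} [Field k] [Field K] [Algebra k K]
    (E F : IntermediateField k K) : ℕ :=
  Module.finrank E (IntermediateField.extendScalars (le_sup_left : E ≤ E ⊔ F))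

/-- A separable isogeny of degree `ℓ` between (the groups of `k̄`-points of) two
Weierstrass curves defined over a finite field `k`, encoded by its action on points:
a surjective group homomorphism, commuting with the Galois action (defined over `k`),
whose kernel has exactly `ℓ` elements (for an isogeny of degree `ℓ`, separability is
equivalent to the kernel having `ℓ` geometric points). -/
structure SepIsogeny (W₁ W₀ : WeierstrassCurve k) (ℓ : ℕ) : Type where
  hom : (W₁⁄(kbar k)).Point →+ (W₀⁄(kbar k)).Point
  surj : Function.Surjective hom
  card_ker : Nat.card hom.ker = ℓ
  equivariant : ∀ σ : kbar k →ₐ[k] kbar k, ∀ P, hom (Point.map (W' := W₁) σ P) = Point.map (W' := W₀) σ (hom P)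

end

/-!
Since `k(P)` is a finite field of cardinality `q`, the map `σ : x ↦ x^q` fixes it pointwise, so
the Frobenius `π` fixes `P` and every point of `ker φ`. Fix `Q₀ ∈ φ⁻¹(P)` and put
`F := π Q₀ - Q₀ ∈ ker φ`. Any other `Q ∈ φ⁻¹(P)` differs from `Q₀` by a point of the kernel,
which `π` fixes, so `π Q = Q + F`; as `π F = F`, induction gives `πⁿ Q = Q + n • F`.
-/

theorem IntermediateField.pow_natCard_eq_self {k K : Type*} [Field k] [Field K] [Algebra k K]
    (L : IntermediateField k K) [Finite L] {a : K} (ha : a ∈ L) : a ^ Nat.card L = a := by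
  have : Fintype L := Fintype.ofFinite L
  rw [Nat.card_eq_fintype_card]
  exact congrArg Subtype.val (FiniteField.pow_card (⟨a, ha⟩ : L))

theorem AddMonoidHom.iterate_eq_add_nsmul {G : Type*} [AddCommMonoid G] (s : G →+ G) {F Q : G}
    (hF : s F = F) (hQ : s Q = Q + F) (n : ℕ) : s^[n] Q = Q + n • F := by
  induction n with
  | zero => simp
  | succ n ih =>
    rw [Function.iterate_succ_apply', ih, map_add, hQ, map_nsmul, hF, succ_nsmul', add_assoc]

theorem AddMonoidHom.exists_mem_ker_iterate_eq_add_nsmul {G H : Type*} [AddCommGroup G]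
    [AddGroup H] (f : G →+ H) (s : G →+ G) {P : H} (hP : ∃ Q₀, f Q₀ = P)
    (hs : ∀ Q, f Q = P → f (s Q) = P) (hker : ∀ T ∈ f.ker, s T = T) :
    ∃ F ∈ f.ker, ∀ Q, f Q = P → ∀ n : ℕ, s^[n] Q = Q + n • F := by
  obtain ⟨Q₀, hQ₀⟩ := hP
  have hF : s Q₀ - Q₀ ∈ f.ker := by
    rw [mem_ker, map_sub, hs Q₀ hQ₀, hQ₀, sub_self]
  refine ⟨s Q₀ - Q₀, hF, fun Q hQ => s.iterate_eq_add_nsmul (hker _ hF) ?_⟩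
  have hdiff : Q - Q₀ ∈ f.ker := by
    rw [mem_ker, map_sub, hQ, hQ₀, sub_self]
  calc s Q = s (Q - Q₀) + s Q₀ := by rw [← map_add, sub_add_cancel]
    _ = Q + (s Q₀ - Q₀) := by rw [hker _ hdiff]; abel

theorem ptField_finiteDimensional {k : Type} [Field k] (W : WeierstrassCurve k)
    (R : (W⁄(kbar k)).Point) : FiniteDimensional k (ptField W R) := by
  cases R with
  | zero => exact inferInstanceAs (FiniteDimensional k (⊥ : IntermediateField k (kbar k)))
  | some => exact IntermediateField.finiteDimensional_adjoin fun x _ =>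
      Algebra.IsIntegral.isIntegral x

theorem WeierstrassCurve.Affine.Point.map_eq_self_of_forall_mem_ptField {k : Type} [Field k]
    {W : WeierstrassCurve k} (σ : kbar k →ₐ[k] kbar k) {R : (W⁄(kbar k)).Point}
    (h : ∀ a ∈ ptField W R, σ a = a) : Point.map σ R = R := by
  cases R with
  | zero => rfl
  | some =>
    rw [Point.map_some, Point.some.injEq]
    exact ⟨h _ (IntermediateField.subset_adjoin k _ (by simp)),
      h _ (IntermediateField.subset_adjoin k _ (by simp))⟩

/-- **Frobenius-translation lemma.** Let `φ : E₁ → E₀` be a separable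
isogeny over a finite field `k` and `P ∈ E₀(k̄)`.  If all points of `ker φ` are defined
over `k(P)`, then there is `F ∈ ker φ` such that `πⁿ(Q) = Q + n•F` for every
`Q ∈ φ⁻¹(P)` and all `n`, where `π` (induced by `σ : x ↦ x^#k(P)`) is the
`k(P)`-Frobenius on `E₁`. -/
theorem frobenius_translation {k : Type} [Field k] [Fintype k]
    {W₁ W₀ : WeierstrassCurve k} {ℓ : ℕ} (φ : SepIsogeny W₁ W₀ ℓ) (P : (W₀⁄(kbar k)).Point)
    (hker : ∀ F ∈ φ.hom.ker, ptField W₁ F ≤ ptField W₀ P)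
    (σ : kbar k →ₐ[k] kbar k) (hσ : ∀ a, σ a = a ^ Nat.card (ptField W₀ P)) :
    ∃ F ∈ φ.hom.ker, ∀ Q : (W₁⁄(kbar k)).Point, φ.hom Q = P →
      ∀ n : ℕ, (fun R => WeierstrassCurve.Affine.Point.map (W' := W₁) σ R)^[n] Q = Q + n • F := by
  have := ptField_finiteDimensional W₀ P
  have : Finite (ptField W₀ P) := Module.finite_of_finite k
  have hσ_fix : ∀ a ∈ ptField W₀ P, σ a = a := fun a ha =>
    (hσ a).trans ((ptField W₀ P).pow_natCard_eq_self ha)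
  refine φ.hom.exists_mem_ker_iterate_eq_add_nsmul (Point.map σ) (φ.surj P) ?_ ?_
  · intro Q hQ
    rw [φ.equivariant, hQ, Point.map_eq_self_of_forall_mem_ptField σ hσ_fix]
  · intro T hT
    exact Point.map_eq_self_of_forall_mem_ptField σ fun a ha => hσ_fix a (hker T hT ha)
end

section
/- With notation as in the Frobenius-translation lemma: if Q ∈ φ⁻¹(P) and F ∈ ker φ satisfies π(Q) = Q + F with πⁿ(Q) = Q + nF for all n, then the degree of the field extension [k(Q) : k(P)] equals the order of F in the group E₁(k̄). -/
/-!
Let `q = #k(P)`, so that `σ` is the `q`-power Frobenius; it fixes `k(P)`. Hence `σⁿ` fixes `Q`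
iff it fixes the compositum `L = k(P)(Q)`, i.e. iff `x ^ qⁿ = x` on the finite field `L`, which
holds exactly when `[L : k(P)] ∣ n` (the Frobenius generates `Gal(L/k(P))`, of order
`[L : k(P)]`). On the other hand `σⁿ Q = Q + n • F`, so `σⁿ` fixes `Q` iff `addOrderOf F ∣ n`.
Both numbers thus have the same multiples, hence are equal.
-/

open WeierstrassCurve WeierstrassCurve.Affine IntermediateField
open scoped Classical

namespace AlgHom

variable {F E : Type*} [Field F] [Field E] [Algebra F E]

def fixedField (τ : E →ₐ[F] E) : IntermediateField F E :=
  (equalizer τ (AlgHom.id F E)).toIntermediateField fun z (hz : τ z = z) =>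
    show τ z⁻¹ = z⁻¹ by rw [map_inv₀, hz]

theorem mem_fixedField {τ : E →ₐ[F] E} {z : E} : z ∈ τ.fixedField ↔ τ z = z :=
  Iff.rfl

end AlgHom

theorem FiniteField.forall_pow_card_pow_eq_self_iff_finrank_dvd (K L : Type*) [Field K]
    [Fintype K] [Field L] [Algebra K L] [Finite L] (n : ℕ) :
    (∀ x : L, x ^ Fintype.card K ^ n = x) ↔ Module.finrank K L ∣ n := by
  rw [← orderOf_frobeniusAlgHom, orderOf_dvd_iff_pow_eq_one, AlgHom.ext_iff]
  simp only [AlgHom.coe_pow, coe_frobeniusAlgHom, pow_iterate, AlgHom.one_apply]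

section Frobenius

variable {k K : Type*} [Field k] [Field K] [Algebra k K] {E : IntermediateField k K}
  {σ : K →ₐ[k] K}

theorem pow_apply_eq_pow_card_pow (hσ : ∀ a, σ a = a ^ Nat.card E) (n : ℕ) (a : K) :
    (σ ^ n) a = a ^ Nat.card E ^ n := by
  rw [AlgHom.coe_pow, show ⇑σ = (· ^ Nat.card E) from funext hσ, pow_iterate]

theorem le_fixedField_pow [Finite E] (hσ : ∀ a, σ a = a ^ Nat.card E) (n : ℕ) :
    E ≤ (σ ^ n).fixedField := fun a ha => by
  have := Fintype.ofFinite E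
  rw [AlgHom.mem_fixedField, pow_apply_eq_pow_card_pow hσ, Nat.card_eq_fintype_card]
  exact congr($(FiniteField.pow_card_pow n (⟨a, ha⟩ : E)).val)

theorem le_fixedField_pow_iff_finrank_dvd {L : IntermediateField k K} (hEL : E ≤ L) [Finite L]
    (hσ : ∀ a, σ a = a ^ Nat.card E) (n : ℕ) :
    L ≤ (σ ^ n).fixedField ↔ Module.finrank E (IntermediateField.extendScalars hEL) ∣ n := by
  have : Finite E := Finite.of_injective _ (IntermediateField.inclusion_injective hEL)
  have := Fintype.ofFinite E
  have : Finite (IntermediateField.extendScalars hEL) := ‹Finite L›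
  rw [← FiniteField.forall_pow_card_pow_eq_self_iff_finrank_dvd, ← Nat.card_eq_fintype_card]
  simp only [SetLike.le_def, AlgHom.mem_fixedField, pow_apply_eq_pow_card_pow hσ, Subtype.ext_iff,
    Subtype.forall]
  rfl

end Frobenius

section Points

variable {k : Type} [Field k] {W : WeierstrassCurve k}

instance ptField.finiteDimensional (C : (W⁄(kbar k)).Point) :
    FiniteDimensional k (ptField W C) := by
  cases C with
  | zero => exact (inferInstance : FiniteDimensional k (⊥ : IntermediateField k (kbar k)))
  | some h => exact finiteDimensional_adjoin fun z _ => Algebra.IsIntegral.isIntegral z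

theorem Point.map_eq_self_iff_ptField_le (τ : kbar k →ₐ[k] kbar k) (C : (W⁄(kbar k)).Point) :
    Point.map (W' := W) τ C = C ↔ ptField W C ≤ τ.fixedField := by
  cases C with
  | zero => exact iff_of_true rfl bot_le
  | some h =>
    rw [Point.map_some, Point.some.injEq, ptField, adjoin_le_iff, Set.insert_subset_iff,
      Set.singleton_subset_iff]
    rfl

theorem Point.iterate_map_eq_map_pow (τ : kbar k →ₐ[k] kbar k) (n : ℕ) (C : (W⁄(kbar k)).Point) :
    (fun R => Point.map (W' := W) τ R)^[n] C = Point.map (W' := W) (τ ^ n) C := by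
  induction n generalizing C with
  | zero => cases C <;> rfl
  | succ n ih => rw [Function.iterate_succ_apply', ih, Point.map_map, pow_succ']; rfl

end Points

theorem degree_eq_orderOf_translation_general {k : Type} [Field k] [Fintype k]
    {W₁ W₀ : WeierstrassCurve k} (P : (W₀⁄(kbar k)).Point)
    (σ : kbar k →ₐ[k] kbar k) (hσ : ∀ a, σ a = a ^ Nat.card (ptField W₀ P))
    (Q : (W₁⁄(kbar k)).Point) (F : (W₁⁄(kbar k)).Point)
    (hπn : ∀ n : ℕ, (fun R => WeierstrassCurve.Affine.Point.map (W' := W₁) σ R)^[n] Q = Q + n • F) :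
    extDeg (ptField W₀ P) (ptField W₁ Q) = addOrderOf F := by
  have : Finite ↥(ptField W₀ P ⊔ ptField W₁ Q) := Module.finite_of_finite k
  have : Finite (ptField W₀ P) := Module.finite_of_finite k
  refine Nat.dvd_right_iff_eq.mp fun n => ?_
  rw [extDeg, ← le_fixedField_pow_iff_finrank_dvd _ hσ, sup_le_iff,
    and_iff_right (le_fixedField_pow hσ n), ← Point.map_eq_self_iff_ptField_le,
    ← Point.iterate_map_eq_map_pow, hπn, add_eq_left, addOrderOf_dvd_iff_nsmul_eq_zero]

/-- With notation as in the Frobenius-translation lemma: if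
`Q ∈ φ⁻¹(P)` and `F ∈ ker φ` satisfy `π(Q) = Q + F`, with `πⁿ(Q) = Q + n•F` for all
`n`, then `[k(Q) : k(P)]` equals the order of `F` in `E₁(k̄)`. -/
theorem degree_eq_orderOf_translation {k : Type} [Field k] [Fintype k]
    {W₁ W₀ : WeierstrassCurve k} {ℓ : ℕ} (φ : SepIsogeny W₁ W₀ ℓ) (P : (W₀⁄(kbar k)).Point)
    (hker : ∀ F ∈ φ.hom.ker, ptField W₁ F ≤ ptField W₀ P)
    (σ : kbar k →ₐ[k] kbar k) (hσ : ∀ a, σ a = a ^ Nat.card (ptField W₀ P))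
    (Q : (W₁⁄(kbar k)).Point) (hQ : φ.hom Q = P) (F : (W₁⁄(kbar k)).Point) (hF : F ∈ φ.hom.ker)
    (hπ : WeierstrassCurve.Affine.Point.map (W' := W₁) σ Q = Q + F)
    (hπn : ∀ n : ℕ, (fun R => WeierstrassCurve.Affine.Point.map (W' := W₁) σ R)^[n] Q = Q + n • F) :
    extDeg (ptField W₀ P) (ptField W₁ Q) = addOrderOf F :=
  degree_eq_orderOf_translation_general P σ hσ Q F hπn
end

section
/- Over the field 𝔽₃, exactly 2/3 of the monic irreducible polynomials of degree 2 f satisfy that all iterates T^k(f) are irreducible, where T(f)(x) = x^{deg f} · f((x²+1)/x). Concretely: of the 3 monic irreducible quadratics over 𝔽₃, exactly 2 yield irreducible families under iteration of T. -/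
open Polynomial

/-- The Q-transform `T(f) = x^(deg f) · f((x²+1)/x)`. -/
noncomputable def Qtransform {F : Type*} [Field F] (f : F[X]) : F[X] :=
  ∑ i ∈ Finset.range (f.natDegree + 1),
    C (f.coeff i) * (X ^ 2 + 1) ^ i * X ^ (f.natDegree - i)

/-!
If `α ≠ 0` is a root of `T(f)`, then `γ = α + α⁻¹` is a root of `f`, so `F⟮γ⟯ ≤ F⟮α⟯` has
degree `n = deg f`, while `[F⟮α⟯ : F] ≤ deg T(f) = 2n`. If `α` lay in `F⟮γ⟯`, then
`γ² - 4 = (α - α⁻¹)²` would be a square there, hence so would be its norm `f(2) f(-2)` in `F`.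
So when `f(2) f(-2)` is not a square, `α` has degree `2n` and `T(f)` is its minimal polynomial.

Over `𝔽₃` one has `T(f)(2) T(f)(-2) = (-1)^n f(2) f(-2)`, so for `f` of even degree this
condition passes from `f` to `T(f)`. Of the three monic irreducible quadratics, `x² + x + 2` and
`x² + 2x + 2` satisfy it, whereas `T(x² + 1) = (x² + x + 2)(x² + 2x + 2)`.
-/

open IntermediateField

theorem PowerBasis.norm_algebraMap_sub_gen {R S : Type*} [CommRing R] [CommRing S] [Algebra R S]
    (pb : PowerBasis R S) (a : R) :
    Algebra.norm R (algebraMap R S a - pb.gen) = (minpoly R pb.gen).eval a := by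
  rw [Algebra.norm_eq_matrix_det pb.basis, map_sub, AlgHom.commutes, ← charpoly_leftMulMatrix,
    Matrix.eval_charpoly, Matrix.algebraMap_eq_diagonal]
  rfl

theorem IntermediateField.finrank_eq_two_mul_of_lt {F L : Type*} [Field F] [Field L]
    [Algebra F L] {E E' : IntermediateField F L} [FiniteDimensional F E'] (h : E < E')
    (hle : Module.finrank F E' ≤ 2 * Module.finrank F E) :
    Module.finrank F E' = 2 * Module.finrank F E := by
  obtain ⟨k, hk⟩ := finrank_dvd_of_le_right h.le
  have hE' : 0 < Module.finrank F E' := Module.finrank_pos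
  have hpos : 0 < Module.finrank F E := by omega
  have hk0 : k ≠ 0 := by rintro rfl; omega
  have hk1 : k ≠ 1 := by
    rintro rfl
    exact h.ne (eq_of_le_of_finrank_eq h.le (by rw [hk, mul_one]))
  have hk2 : k ≤ 2 := Nat.le_of_mul_le_mul_left (by linarith) hpos
  rw [hk, mul_comm]
  congr 1
  omega

section Qtransform

variable {F L : Type*} [Field F] [Field L] [Algebra F L]

theorem norm_adjoinSimple_gen_sq_sub_four {γ : L} (hγ : IsIntegral F γ) :
    Algebra.norm F (AdjoinSimple.gen F γ ^ 2 - 4) =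
      (minpoly F γ).eval 2 * (minpoly F γ).eval (-2) := by
  have h := (adjoin.powerBasis hγ).norm_algebraMap_sub_gen
  rw [adjoin.powerBasis_gen, minpoly_gen] at h
  rw [← h, ← h, ← map_mul]
  congr 1
  rw [map_neg, map_ofNat]
  ring

theorem notMem_adjoin_add_inv {α : L} (hα : α ≠ 0) (hγ : IsIntegral F (α + α⁻¹))
    (hsq : ¬IsSquare ((minpoly F (α + α⁻¹)).eval 2 * (minpoly F (α + α⁻¹)).eval (-2))) :
    α ∉ F⟮α + α⁻¹⟯ := by
  intro hmem
  set a : F⟮α + α⁻¹⟯ := ⟨α, hmem⟩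
  have ha : a ≠ 0 := Subtype.coe_ne_coe.1 hα
  have hgen : AdjoinSimple.gen F (α + α⁻¹) = a + a⁻¹ := rfl
  refine hsq (norm_adjoinSimple_gen_sq_sub_four hγ ▸ IsSquare.map _ ⟨a - a⁻¹, ?_⟩)
  rw [hgen]
  field_simp
  ring

theorem aeval_Qtransform (f : F[X]) {α : L} (hα : α ≠ 0) :
    aeval α (Qtransform f) = α ^ f.natDegree * aeval (α + α⁻¹) f := by
  rw [Qtransform, map_sum, aeval_eq_sum_range, Finset.mul_sum]
  refine Finset.sum_congr rfl fun i hi ↦ ?_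
  have hi : i ≤ f.natDegree := Nat.lt_succ_iff.mp (Finset.mem_range.mp hi)
  have hsq : α ^ 2 + 1 = α * (α + α⁻¹) := by field_simp
  simp only [map_mul, map_pow, map_add, aeval_X, aeval_C, map_one, Algebra.smul_def]
  rw [hsq, mul_pow, ← Nat.add_sub_cancel' hi, pow_add, Nat.add_sub_cancel_left]
  ring

theorem coeff_zero_Qtransform (f : F[X]) : (Qtransform f).coeff 0 = f.leadingCoeff := by
  rw [coeff_zero_eq_eval_zero, Qtransform, eval_finsetSum,
    Finset.sum_eq_single_of_mem _ (Finset.self_mem_range_succ _)]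
  · simp
  · intro i hi hne
    have : f.natDegree - i ≠ 0 := by rw [Finset.mem_range] at hi; omega
    simp [this]

theorem monic_X_sq_add_one_pow (n : ℕ) : ((X ^ 2 + 1 : F[X]) ^ n).Monic := by
  monicity!

theorem natDegree_X_sq_add_one_pow (n : ℕ) : ((X ^ 2 + 1 : F[X]) ^ n).natDegree = 2 * n := by
  rw [natDegree_pow, mul_comm, (by compute_degree! : (X ^ 2 + 1 : F[X]).natDegree = 2)]

theorem Qtransform_eq_add_of_monic {f : F[X]} (hf : f.Monic) :
    ∃ r : F[X], r.degree < ((X ^ 2 + 1 : F[X]) ^ f.natDegree).degree ∧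
      Qtransform f = r + (X ^ 2 + 1) ^ f.natDegree := by
  refine ⟨_, ?_, by rw [Qtransform, Finset.sum_range_succ, Nat.sub_self, pow_zero, mul_one,
    ← leadingCoeff, hf.leadingCoeff, C_1, one_mul]⟩
  rw [degree_eq_natDegree (monic_X_sq_add_one_pow _).ne_zero, natDegree_X_sq_add_one_pow]
  refine (degree_sum_le _ _).trans_lt ((Finset.sup_lt_iff (WithBot.bot_lt_coe _)).2 fun i hi ↦ ?_)
  have hi := Finset.mem_range.1 hi
  refine (degree_le_of_natDegree_le (n := 2 * i + (f.natDegree - i)) ?_).trans_lt ?_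
  · compute_degree
    omega
  · exact_mod_cast (by omega : 2 * i + (f.natDegree - i) < 2 * f.natDegree)

theorem monic_Qtransform {f : F[X]} (hf : f.Monic) : (Qtransform f).Monic := by
  obtain ⟨r, hr, hQ⟩ := Qtransform_eq_add_of_monic hf
  exact hQ ▸ (monic_X_sq_add_one_pow _).add_of_right hr

theorem natDegree_Qtransform {f : F[X]} (hf : f.Monic) :
    (Qtransform f).natDegree = 2 * f.natDegree := by
  obtain ⟨r, hr, hQ⟩ := Qtransform_eq_add_of_monic hf
  rw [hQ, natDegree_add_eq_right_of_degree_lt hr, natDegree_X_sq_add_one_pow]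

theorem irreducible_Qtransform {f : F[X]} (hf : f.Monic) (hirr : Irreducible f)
    (hsq : ¬IsSquare (f.eval 2 * f.eval (-2))) : Irreducible (Qtransform f) := by
  have hQ := monic_Qtransform hf
  have hQdeg := natDegree_Qtransform hf
  obtain ⟨α, hα⟩ := IsAlgClosed.exists_aeval_eq_zero (AlgebraicClosure F) (Qtransform f) <| by
    rw [degree_eq_natDegree hQ.ne_zero, hQdeg]
    exact_mod_cast (Nat.mul_pos two_pos hirr.natDegree_pos).ne'
  have hα0 : α ≠ 0 := by
    rintro rfl
    rw [← coeff_zero_eq_aeval_zero', coeff_zero_Qtransform, hf.leadingCoeff, map_one] at hα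
    exact one_ne_zero hα
  have hγ : aeval (α + α⁻¹) f = 0 := by
    rw [aeval_Qtransform f hα0] at hα
    exact (mul_eq_zero.1 hα).resolve_left (pow_ne_zero _ hα0)
  have hαint : IsIntegral F α := Algebra.IsIntegral.isIntegral α
  have hγint : IsIntegral F (α + α⁻¹) := Algebra.IsIntegral.isIntegral _
  have := adjoin.finiteDimensional hαint
  have hminγ : minpoly F (α + α⁻¹) = f := (minpoly.eq_of_irreducible_of_monic hirr hγ hf).symm
  have hlt : F⟮α + α⁻¹⟯ < F⟮α⟯ := by
    refine lt_of_le_of_ne (adjoin_simple_le_iff.2 <|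
      add_mem (mem_adjoin_simple_self F α) (inv_mem (mem_adjoin_simple_self F α))) fun h ↦ ?_
    exact notMem_adjoin_add_inv hα0 hγint (hminγ ▸ hsq) (h ▸ mem_adjoin_simple_self F α)
  have hdvd : minpoly F α ∣ Qtransform f := minpoly.dvd F α hα
  have hrank := finrank_eq_two_mul_of_lt (E := F⟮α + α⁻¹⟯) hlt
  rw [adjoin.finrank hαint, adjoin.finrank hγint, hminγ, ← hQdeg] at hrank
  rw [eq_of_monic_of_dvd_of_natDegree_le (minpoly.monic hαint) hQ hdvd
    (hrank (natDegree_le_of_dvd hdvd hQ.ne_zero)).ge]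
  exact minpoly.irreducible hαint

end Qtransform

section Quadratic

variable {F : Type*} [Field F]

theorem monic_X_sq_add_C_mul_X_add_C (a b : F) : (X ^ 2 + C a * X + C b).Monic := by
  monicity!

theorem natDegree_X_sq_add_C_mul_X_add_C (a b : F) : (X ^ 2 + C a * X + C b).natDegree = 2 := by
  compute_degree!

theorem irreducible_X_sq_add_C_mul_X_add_C_iff (a b : F) :
    Irreducible (X ^ 2 + C a * X + C b) ↔ ∀ x, x ^ 2 + a * x + b ≠ 0 := by
  have hdeg := natDegree_X_sq_add_C_mul_X_add_C a b
  rw [(monic_X_sq_add_C_mul_X_add_C a b).irreducible_iff_roots_eq_zero_of_degree_le_three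
    hdeg.ge (by omega), Multiset.eq_zero_iff_forall_notMem]
  simp [mem_roots (monic_X_sq_add_C_mul_X_add_C a b).ne_zero]

theorem eq_X_sq_add_C_mul_X_add_C {f : F[X]} (hf : f.Monic) (hdeg : f.natDegree = 2) :
    f = X ^ 2 + C (f.coeff 1) * X + C (f.coeff 0) := by
  conv_lhs => rw [hf.as_sum, hdeg]
  simp only [Finset.sum_range_succ, Finset.sum_range_zero, pow_zero, pow_one, mul_one, zero_add]
  ring

theorem natCard_subtype_eq_of_monic_natDegree_two (P : F[X] → Prop)
    (hP : ∀ f, P f → f.Monic ∧ f.natDegree = 2) :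
    Nat.card {f // P f} = Nat.card {p : F × F // P (X ^ 2 + C p.1 * X + C p.2)} := by
  refine Nat.card_congr
    { toFun f := ⟨(f.1.coeff 1, f.1.coeff 0), ?_⟩
      invFun p := ⟨_, p.2⟩
      left_inv f := ?_
      right_inv p := ?_ }
  · rw [← eq_X_sq_add_C_mul_X_add_C (hP _ f.2).1 (hP _ f.2).2]
    exact f.2
  · exact Subtype.ext (eq_X_sq_add_C_mul_X_add_C (hP _ f.2).1 (hP _ f.2).2).symm
  · ext <;> simp

end Quadratic

structure QStable (f : (ZMod 3)[X]) : Prop where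
  monic : f.Monic
  irreducible : Irreducible f
  even_natDegree : Even f.natDegree
  not_isSquare : ¬IsSquare (f.eval 2 * f.eval (-2))

theorem eval_two_mul_eval_neg_two_Qtransform (f : (ZMod 3)[X]) :
    (Qtransform f).eval 2 * (Qtransform f).eval (-2) =
      (-1) ^ f.natDegree * (f.eval 2 * f.eval (-2)) := by
  have h := fun x : ZMod 3 ↦ aeval_Qtransform (L := ZMod 3) f (α := x)
  simp only [coe_aeval_eq_eval] at h
  rw [h 2 (by decide), h (-2) (by decide),
    inv_eq_of_mul_eq_one_right (show (2 : ZMod 3) * 2 = 1 by decide),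
    inv_eq_of_mul_eq_one_right (show (-2 : ZMod 3) * -2 = 1 by decide),
    show (2 : ZMod 3) + 2 = -2 by decide, show (-2 : ZMod 3) + -2 = 2 by decide,
    show (-1 : ZMod 3) = 2 * -2 by decide, mul_pow]
  ring

theorem qStable_Qtransform {f : (ZMod 3)[X]} (hf : QStable f) : QStable (Qtransform f) where
  monic := monic_Qtransform hf.monic
  irreducible := irreducible_Qtransform hf.monic hf.irreducible hf.not_isSquare
  even_natDegree := by
    rw [natDegree_Qtransform hf.monic]
    exact even_two_mul _
  not_isSquare := by
    rw [eval_two_mul_eval_neg_two_Qtransform, hf.even_natDegree.neg_one_pow, one_mul]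
    exact hf.not_isSquare

theorem QStable.irreducible_iterate {f : (ZMod 3)[X]} (hf : QStable f) (k : ℕ) :
    Irreducible (Qtransform^[k] f) := by
  suffices QStable (Qtransform^[k] f) from this.irreducible
  induction k with
  | zero => exact hf
  | succ k ih =>
    rw [Function.iterate_succ_apply']
    exact qStable_Qtransform ih

theorem Qtransform_X_sq_add_one :
    Qtransform (X ^ 2 + 1 : (ZMod 3)[X]) = (X ^ 2 + X + 2) * (X ^ 2 + 2 * X + 2) := by
  have h3 : (3 : (ZMod 3)[X]) = 0 := by exact_mod_cast CharP.cast_eq_zero (ZMod 3)[X] 3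
  have hdeg : (X ^ 2 + 1 : (ZMod 3)[X]).natDegree = 2 := by compute_degree!
  rw [Qtransform, hdeg, Finset.sum_range_succ, Finset.sum_range_succ, Finset.sum_range_one]
  simp only [coeff_add, coeff_X_pow, coeff_one]
  norm_num
  linear_combination (-(X : (ZMod 3)[X]) ^ 3 - X ^ 2 - 2 * X - 1) * h3

theorem not_irreducible_Qtransform_X_sq_add_one :
    ¬Irreducible (Qtransform (X ^ 2 + 1 : (ZMod 3)[X])) := by
  have h₁ : (X ^ 2 + X + 2 : (ZMod 3)[X]).natDegree = 2 := by compute_degree!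
  have h₂ : (X ^ 2 + 2 * X + 2 : (ZMod 3)[X]).natDegree = 2 := by compute_degree!
  rw [Qtransform_X_sq_add_one]
  exact fun h ↦ (h.isUnit_or_isUnit rfl).elim (not_isUnit_of_natDegree_pos _ (by omega))
    (not_isUnit_of_natDegree_pos _ (by omega))

theorem forall_irreducible_iterate_Qtransform_iff (a b : ZMod 3) :
    (∀ k, Irreducible (Qtransform^[k] (X ^ 2 + C a * X + C b))) ↔
      (∀ x, x ^ 2 + a * x + b ≠ 0) ∧ ¬IsSquare ((4 + 2 * a + b) * (4 - 2 * a + b)) := by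
  have heval : eval 2 (X ^ 2 + C a * X + C b) * eval (-2) (X ^ 2 + C a * X + C b) =
      (4 + 2 * a + b) * (4 - 2 * a + b) := by
    simp only [eval_add, eval_pow, eval_mul, eval_X, eval_C]
    ring
  constructor
  · intro h
    have hroots := (irreducible_X_sq_add_C_mul_X_add_C_iff a b).1 (h 0)
    refine ⟨hroots, fun hsq ↦ ?_⟩
    obtain ⟨rfl, rfl⟩ : a = 0 ∧ b = 1 := by
      clear h heval
      revert a b
      decide
    exact not_irreducible_Qtransform_X_sq_add_one (by simpa using h 1)
  · rintro ⟨hroots, hsq⟩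
    exact QStable.irreducible_iterate
      { monic := monic_X_sq_add_C_mul_X_add_C a b
        irreducible := (irreducible_X_sq_add_C_mul_X_add_C_iff a b).2 hroots
        even_natDegree := by
          rw [natDegree_X_sq_add_C_mul_X_add_C]
          exact even_two
        not_isSquare := heval ▸ hsq }

/-- Over `𝔽₃` there are exactly 3 monic irreducible quadratics, and
exactly 2 of them yield irreducible families under iteration of the Q-transform
(density 2/3). -/
theorem density_deg_two_F3 :
    Nat.card {f : (ZMod 3)[X] // f.Monic ∧ Irreducible f ∧ f.natDegree = 2} = 3 ∧
    Nat.card {f : (ZMod 3)[X] // f.Monic ∧ Irreducible f ∧ f.natDegree = 2 ∧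
      ∀ k : ℕ, Irreducible (Qtransform^[k] f)} = 2 := by
  rw [natCard_subtype_eq_of_monic_natDegree_two _ fun f hf ↦ ⟨hf.1, hf.2.2⟩,
    natCard_subtype_eq_of_monic_natDegree_two _ fun f hf ↦ ⟨hf.1, hf.2.2.1⟩]
  simp only [monic_X_sq_add_C_mul_X_add_C, natDegree_X_sq_add_C_mul_X_add_C,
    irreducible_X_sq_add_C_mul_X_add_C_iff, forall_irreducible_iterate_Qtransform_iff,
    true_and, and_true]
  constructor <;> rw [Nat.card_eq_fintype_card] <;> decide
end
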